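/- Transformation of the interpolation seminorm under affine maps: with O = F(Ô), F(x̂)=x0+Bx̂, B invertible, v̂ = v∘F, and s ∈ (0,1), one has |det B| ||B||^{-2s} |v̂|_{[L^2(Ô),H^1(Ô)]_s}^2 ≤ |v|_{[L^2(O),H^1(O)]_s}^2 ≤ |det B| ||B^{-1}||^{2s} |v̂|_{[L^2(Ô),H^1(Ô)]_s}^2. -/

import Mathlib

open MeasureTheory Metric Set Bornology
noncomputable section

/-- Euclidean space `ℝⁿ`. -/
abbrev Euc (n : ℕ) := EuclideanSpace ℝ (Fin n)

variable {n : ℕ}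

/-- Squared `L²(O)` norm. -/
def l2Sq (O : Set (Euc n)) (v : Euc n → ℝ) : ℝ := ∫ x in O, (v x) ^ 2

/-- Squared Sobolev-Slobodeckij seminorm `|v|_{s,O}²`. -/
def slobSq (s : ℝ) (O : Set (Euc n)) (v : Euc n → ℝ) : ℝ :=
  ∫ x in O, ∫ y in O, |v x - v y| ^ 2 / ‖x - y‖ ^ ((n : ℝ) + 2 * s)

/-- Squared Sobolev-Slobodeckij norm `‖v‖_{s,O}²`. -/
def ssNormSq (s : ℝ) (O : Set (Euc n)) (v : Euc n → ℝ) : ℝ := l2Sq O v + slobSq s O v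

/-- Quotient-type seminorm `|v|_{s,O,inf} = inf_c ‖v+c‖_{s,O}`. -/
def quotSemi (s : ℝ) (O : Set (Euc n)) (v : Euc n → ℝ) : ℝ :=
  ⨅ c : ℝ, Real.sqrt (ssNormSq s O (fun x => v x + c))

/-- Membership in `H^s(O)`: square integrable and finite Slobodeckij double integral. -/
def memHs (s : ℝ) (O : Set (Euc n)) (v : Euc n → ℝ) : Prop :=
  MemLp v 2 (volume.restrict O) ∧
  Integrable (fun p : Euc n × Euc n => |v p.1 - v p.2| ^ 2 / ‖p.1 - p.2‖ ^ ((n : ℝ) + 2 * s))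
    ((volume.restrict O).prod (volume.restrict O))

/-- Squared `H¹(O)` seminorm (`L²` norm of the gradient). -/
def h1SemiSq (O : Set (Euc n)) (w : Euc n → ℝ) : ℝ := ∫ x in O, ‖fderiv ℝ w x‖ ^ 2

/-- Membership in `H¹(O)`. -/
def memH1 (O : Set (Euc n)) (w : Euc n → ℝ) : Prop :=
  MemLp w 2 (volume.restrict O) ∧ DifferentiableOn ℝ w O ∧
  MemLp (fun x => ‖fderiv ℝ w x‖) 2 (volume.restrict O)

/-- Squared interpolation seminorm `|v|_{[L²(O),H¹(O)]_s}²` (K-method, `H¹`-seminorm). -/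
def interpSemiSq (s : ℝ) (O : Set (Euc n)) (v : Euc n → ℝ) : ℝ :=
  ∫ t in Set.Ioi (0 : ℝ), t ^ (-2 * s - 1) *
    ⨅ w : {w : Euc n → ℝ // memH1 O w},
      (l2Sq O (fun x => v x - w.1 x) + t ^ 2 * h1SemiSq O w.1)

/-- Squared interpolation norm `‖v‖_{[L²(O),H¹(O)]_s}²` (K-method, full `H¹`-norm). -/
def interpNormSq (s : ℝ) (O : Set (Euc n)) (v : Euc n → ℝ) : ℝ :=
  ∫ t in Set.Ioi (0 : ℝ), t ^ (-2 * s - 1) *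
    ⨅ w : {w : Euc n → ℝ // memH1 O w},
      (l2Sq O (fun x => v x - w.1 x) + t ^ 2 * (l2Sq O w.1 + h1SemiSq O w.1))

/-- Membership in `H¹₀(O)`: approximable in the `H¹` norm by smooth compactly
supported functions with support in `O`. -/
def memH10 (O : Set (Euc n)) (w : Euc n → ℝ) : Prop :=
  memH1 O w ∧ ∃ φ : ℕ → Euc n → ℝ,
    (∀ k, ContDiff ℝ (⊤ : ℕ∞) (φ k) ∧ HasCompactSupport (φ k) ∧ tsupport (φ k) ⊆ O) ∧
    Filter.Tendsto
      (fun k => l2Sq O (fun x => w x - φ k x) + h1SemiSq O (fun x => w x - φ k x))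
      Filter.atTop (nhds 0)

/-- Squared interpolation norm `‖v‖_{[L²(O),H¹₀(O)]_s}²` (K-method, `H¹`-seminorm on `H¹₀`). -/
def interpNorm0Sq (s : ℝ) (O : Set (Euc n)) (v : Euc n → ℝ) : ℝ :=
  ∫ t in Set.Ioi (0 : ℝ), t ^ (-2 * s - 1) *
    ⨅ w : {w : Euc n → ℝ // memH10 O w},
      (l2Sq O (fun x => v x - w.1 x) + t ^ 2 * h1SemiSq O w.1)

/-- Squared weighted Sobolev-Slobodeckij norm `‖v‖_{∼,s,O}²`. -/
def tildeNormSq (s : ℝ) (O : Set (Euc n)) (v : Euc n → ℝ) : ℝ :=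
  slobSq s O v + ∫ x in O, (v x) ^ 2 / (Metric.infDist x (frontier O)) ^ (2 * s)

/-- A bounded Lipschitz domain: open, bounded, and near every boundary point the set
coincides, in some orthonormal frame (isometry `g`), with the region above the graph of a
Lipschitz function `φ` which does not depend on the vertical coordinate `i`. -/
def IsLipschitzDomain (O : Set (Euc n)) : Prop :=
  IsOpen O ∧ IsBounded O ∧ ∀ p ∈ frontier O,
    ∃ (g : Euc n ≃ᵢ Euc n) (i : Fin n) (φ : (Fin n → ℝ) → ℝ) (L : NNReal) (ε : ℝ),
      0 < ε ∧ LipschitzWith L φ ∧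
      (∀ y : Fin n → ℝ, φ y = φ (Function.update y i 0)) ∧
      ∀ x ∈ Metric.ball p ε, (x ∈ O ↔ φ (g x) < (g x) i)

/-- The "inner diameter": supremum of diameters of balls contained in `O`. -/
def innerDiam (O : Set (Euc n)) : ℝ :=
  sSup {d : ℝ | ∃ (x : Euc n) (r : ℝ), 0 < r ∧ Metric.ball x r ⊆ O ∧ d = 2 * r}

/-- Operator norm of the linear part of an affine map. -/
def opN (B : Euc n ≃L[ℝ] Euc n) : ℝ := ‖(B : Euc n →L[ℝ] Euc n)‖

/-- Absolute value of the determinant of the linear part. -/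
def absDet (B : Euc n ≃L[ℝ] Euc n) : ℝ := |LinearMap.det (B.toLinearEquiv.toLinearMap)|


/-! ### Auxiliary development for Statement 14 -/

section InterpAux

open ENNReal

lemma l2Sq_nonneg (O : Set (Euc n)) (v : Euc n → ℝ) : 0 ≤ l2Sq O v :=
  integral_nonneg fun _ => sq_nonneg _

lemma h1SemiSq_nonneg (O : Set (Euc n)) (w : Euc n → ℝ) : 0 ≤ h1SemiSq O w :=
  integral_nonneg fun _ => sq_nonneg _

lemma memH1_zero (O : Set (Euc n)) : memH1 O (fun _ => (0 : ℝ)) := by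
  refine ⟨MemLp.zero, (differentiable_const 0).differentiableOn, ?_⟩
  have h : (fun x : Euc n => ‖fderiv ℝ (fun _ : Euc n => (0:ℝ)) x‖) = fun _ => (0 : ℝ) := by
    funext x
    simp [fderiv_const]
  rw [h]
  exact MemLp.zero

instance instNonemptyH1 (O : Set (Euc n)) : Nonempty {w : Euc n → ℝ // memH1 O w} :=
  ⟨⟨_, memH1_zero O⟩⟩

/-- The K-functional appearing in `interpSemiSq`. -/
def Kf (O : Set (Euc n)) (v : Euc n → ℝ) (t : ℝ) : ℝ :=
  ⨅ w : {w : Euc n → ℝ // memH1 O w},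
      (l2Sq O (fun x => v x - w.1 x) + t ^ 2 * h1SemiSq O w.1)

lemma interpSemiSq_eq_Kf (s : ℝ) (O : Set (Euc n)) (v : Euc n → ℝ) :
    interpSemiSq s O v = ∫ t in Set.Ioi (0:ℝ), t ^ (-2 * s - 1) * Kf O v t := rfl

lemma bddBelow_Kf (O : Set (Euc n)) (v : Euc n → ℝ) {u : ℝ} (hu : 0 ≤ u) :
    BddBelow (Set.range fun w : {w : Euc n → ℝ // memH1 O w} =>
      l2Sq O (fun x => v x - w.1 x) + u * h1SemiSq O w.1) := by
  refine ⟨0, ?_⟩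
  rintro x ⟨w, rfl⟩
  exact add_nonneg (l2Sq_nonneg _ _) (mul_nonneg hu (h1SemiSq_nonneg _ _))

lemma Kf_nonneg (O : Set (Euc n)) (v : Euc n → ℝ) (t : ℝ) : 0 ≤ Kf O v t :=
  Real.iInf_nonneg fun w =>
    add_nonneg (l2Sq_nonneg _ _) (mul_nonneg (sq_nonneg t) (h1SemiSq_nonneg _ _))

/-- Auxiliary monotone version of the K-functional. -/
def gK (O : Set (Euc n)) (v : Euc n → ℝ) (u : ℝ) : ℝ :=
  ⨅ w : {w : Euc n → ℝ // memH1 O w},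
      (l2Sq O (fun x => v x - w.1 x) + max u 0 * h1SemiSq O w.1)

lemma Kf_eq_gK (O : Set (Euc n)) (v : Euc n → ℝ) (t : ℝ) : Kf O v t = gK O v (t ^ 2) := by
  unfold Kf gK
  congr 1
  funext w
  rw [max_eq_left (sq_nonneg t)]

lemma gK_mono (O : Set (Euc n)) (v : Euc n → ℝ) : Monotone (gK O v) := by
  intro u u' h
  refine ciInf_mono (bddBelow_Kf O v (le_max_right _ _)) fun w => ?_
  exact add_le_add le_rfl
    (mul_le_mul_of_nonneg_right (max_le_max h le_rfl) (h1SemiSq_nonneg _ _))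

lemma measurable_Kf (O : Set (Euc n)) (v : Euc n → ℝ) : Measurable (Kf O v) := by
  have h : Kf O v = (gK O v) ∘ (fun t : ℝ => t ^ 2) := funext fun t => Kf_eq_gK O v t
  rw [h]
  have hsq : Measurable (fun t : ℝ => t ^ 2) := by
    have : (fun t : ℝ => t ^ 2) = fun t : ℝ => t * t := funext fun t => sq t
    rw [this]; exact measurable_id.mul measurable_id
  exact (gK_mono O v).measurable.comp hsq

lemma absDet_pos (B : Euc n ≃L[ℝ] Euc n) : 0 < absDet B :=
  abs_pos.mpr (LinearEquiv.isUnit_det' B.toLinearEquiv).ne_zero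

lemma opN_pos [Nontrivial (Euc n)] (B : Euc n ≃L[ℝ] Euc n) : 0 < opN B := by
  have hne : (B : Euc n →L[ℝ] Euc n) ≠ 0 := by
    intro h
    rcases exists_ne (0 : Euc n) with ⟨x, hx⟩
    apply hx
    have hBx : B x = 0 := by rw [show B x = (B : Euc n →L[ℝ] Euc n) x from rfl, h]; rfl
    have := B.injective (by simpa using hBx)
    simpa using this
  exact norm_pos_iff.mpr hne

lemma affine_injOn (x0 : Euc n) (B : Euc n ≃L[ℝ] Euc n) (s : Set (Euc n)) :
    Set.InjOn (fun y => x0 + B y) s := fun a _ b _ h =>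
  B.injective (add_left_cancel h)

lemma absDet_symm (B : Euc n ≃L[ℝ] Euc n) : absDet B.symm = (absDet B)⁻¹ := by
  have hcomp : (B.symm.toLinearEquiv.toLinearMap).comp (B.toLinearEquiv.toLinearMap)
      = LinearMap.id := by
    ext x; simp
  have h1 : LinearMap.det (B.symm.toLinearEquiv.toLinearMap) *
      LinearMap.det (B.toLinearEquiv.toLinearMap) = 1 := by
    rw [← LinearMap.det_comp, hcomp, LinearMap.det_id]
  have h2 : absDet B.symm * absDet B = 1 := by
    unfold absDet
    rw [← abs_mul, h1, abs_one]
  exact eq_inv_of_mul_eq_one_left h2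

lemma setIntegral_affine (x0 : Euc n) (B : Euc n ≃L[ℝ] Euc n) {Ohat : Set (Euc n)}
    (hO : MeasurableSet Ohat) (g : Euc n → ℝ) :
    ∫ x in (fun y => x0 + B y) '' Ohat, g x = absDet B * ∫ y in Ohat, g (x0 + B y) := by
  have hderiv : ∀ x ∈ Ohat, HasFDerivWithinAt (fun y => x0 + B y)
      ((B : Euc n →L[ℝ] Euc n)) Ohat x := fun x _ =>
    ((B.hasFDerivAt).const_add x0).hasFDerivWithinAt
  rw [integral_image_eq_integral_abs_det_fderiv_smul volume hO hderiv
    (affine_injOn x0 B Ohat) g]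
  have hdet : |(B : Euc n →L[ℝ] Euc n).det| = absDet B := rfl
  simp only [hdet, smul_eq_mul]
  exact integral_const_mul _ _

lemma measurableEmbedding_affine (x0 : Euc n) (B : Euc n ≃L[ℝ] Euc n) :
    MeasurableEmbedding (fun y : Euc n => x0 + B y) :=
  ((B.toHomeomorph).trans (Homeomorph.addLeft x0)).measurableEmbedding

lemma isOpen_affine_image (x0 : Euc n) (B : Euc n ≃L[ℝ] Euc n) {Ohat : Set (Euc n)}
    (hO : IsOpen Ohat) : IsOpen ((fun y => x0 + B y) '' Ohat) :=
  ((B.toHomeomorph).trans (Homeomorph.addLeft x0)).isOpenMap _ hO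

lemma map_affine_volume (x0 : Euc n) (B : Euc n ≃L[ℝ] Euc n) :
    Measure.map (fun y : Euc n => x0 + B y) volume
      = ENNReal.ofReal (absDet B)⁻¹ • volume := by
  have h1 : (fun y : Euc n => x0 + B y) = (fun x : Euc n => x0 + x) ∘ (fun y : Euc n => B y) :=
    rfl
  have hdet : LinearMap.det (B.toLinearEquiv.toLinearMap) ≠ 0 :=
    (LinearEquiv.isUnit_det' B.toLinearEquiv).ne_zero
  have hmapB : Measure.map (fun y : Euc n => B y) volume
      = ENNReal.ofReal (absDet B)⁻¹ • volume := by
    have hcoe : (fun y : Euc n => B y) = ⇑(B.toLinearEquiv.toLinearMap) := rfl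
    rw [hcoe, Measure.map_linearMap_addHaar_eq_smul_addHaar volume hdet, abs_inv]
    rfl
  rw [h1, ← Measure.map_map (measurable_const_add x0) B.continuous.measurable, hmapB,
    Measure.map_smul]
  congr 1
  exact Measure.IsAddLeftInvariant.map_add_left_eq_self x0

lemma map_affine_restrict (x0 : Euc n) (B : Euc n ≃L[ℝ] Euc n) {Ohat : Set (Euc n)}
    (hO : MeasurableSet Ohat) :
    Measure.map (fun y : Euc n => x0 + B y) (volume.restrict Ohat)
      = ENNReal.ofReal (absDet B)⁻¹ • volume.restrict ((fun y => x0 + B y) '' Ohat) := by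
  have hme := measurableEmbedding_affine x0 B
  have himg : MeasurableSet ((fun y : Euc n => x0 + B y) '' Ohat) :=
    hme.measurableSet_image.mpr hO
  have hpre : (fun y : Euc n => x0 + B y) ⁻¹' ((fun y => x0 + B y) '' Ohat) = Ohat :=
    Set.preimage_image_eq _ (fun a b h => B.injective (add_left_cancel h))
  have hrm := Measure.restrict_map (μ := volume) hme.measurable himg
  rw [hpre] at hrm
  rw [← hrm, map_affine_volume x0 B, Measure.restrict_smul]

lemma memℒp_comp_affine (x0 : Euc n) (B : Euc n ≃L[ℝ] Euc n) {Ohat : Set (Euc n)}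
    (hO : MeasurableSet Ohat) {u : Euc n → ℝ}
    (hu : MemLp u 2 (volume.restrict ((fun y => x0 + B y) '' Ohat))) :
    MemLp (fun y => u (x0 + B y)) 2 (volume.restrict Ohat) := by
  have hme := measurableEmbedding_affine x0 B
  have h : MemLp u 2 (Measure.map (fun y : Euc n => x0 + B y) (volume.restrict Ohat)) := by
    rw [map_affine_restrict x0 B hO]
    exact hu.smul_measure ENNReal.ofReal_ne_top
  exact hme.memLp_map_measure_iff.1 h

lemma fderiv_comp_affine (x0 : Euc n) (B : Euc n ≃L[ℝ] Euc n) {Ohat : Set (Euc n)}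
    {w : Euc n → ℝ} (hOopen : IsOpen ((fun y => x0 + B y) '' Ohat))
    (hw : DifferentiableOn ℝ w ((fun y => x0 + B y) '' Ohat)) {y : Euc n} (hy : y ∈ Ohat) :
    fderiv ℝ (fun z => w (x0 + B z)) y
      = (fderiv ℝ w (x0 + B y)).comp (B : Euc n →L[ℝ] Euc n) := by
  have hmem : x0 + B y ∈ (fun y => x0 + B y) '' Ohat := Set.mem_image_of_mem _ hy
  have hdw : DifferentiableAt ℝ w (x0 + B y) :=
    (hw (x0 + B y) hmem).differentiableAt (hOopen.mem_nhds hmem)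
  have hdF : HasFDerivAt (fun z : Euc n => x0 + B z) (B : Euc n →L[ℝ] Euc n) y :=
    (B.hasFDerivAt).const_add x0
  exact (hdw.hasFDerivAt.comp y hdF).fderiv

lemma memH1_comp_affine (x0 : Euc n) (B : Euc n ≃L[ℝ] Euc n) {Ohat : Set (Euc n)}
    (hO : IsOpen Ohat) {w : Euc n → ℝ} (hw : memH1 ((fun y => x0 + B y) '' Ohat) w) :
    memH1 Ohat (fun y => w (x0 + B y)) := by
  have hOopen : IsOpen ((fun y => x0 + B y) '' Ohat) := isOpen_affine_image x0 B hO
  obtain ⟨hw1, hw2, hw3⟩ := hw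
  refine ⟨memℒp_comp_affine x0 B hO.measurableSet hw1, ?_, ?_⟩
  · intro y hy
    have hmem : x0 + B y ∈ (fun y => x0 + B y) '' Ohat := Set.mem_image_of_mem _ hy
    have hdw : DifferentiableAt ℝ w (x0 + B y) :=
      (hw2 (x0 + B y) hmem).differentiableAt (hOopen.mem_nhds hmem)
    have hdF : DifferentiableAt ℝ (fun z : Euc n => x0 + B z) y :=
      ((B.hasFDerivAt).const_add x0).differentiableAt
    exact (hdw.comp y hdF).differentiableWithinAt
  · refine MemLp.of_le ((memℒp_comp_affine x0 B hO.measurableSet hw3).const_mul (opN B))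
      ((measurable_fderiv ℝ _).norm.aestronglyMeasurable) ?_
    refine (ae_restrict_iff' hO.measurableSet).2 (Filter.Eventually.of_forall fun y hy => ?_)
    rw [fderiv_comp_affine x0 B hOopen hw2 hy]
    have h1 : ‖(fderiv ℝ w (x0 + B y)).comp (B : Euc n →L[ℝ] Euc n)‖
        ≤ ‖fderiv ℝ w (x0 + B y)‖ * opN B := ContinuousLinearMap.opNorm_comp_le _ _
    have h2 : (0:ℝ) ≤ opN B * ‖fderiv ℝ w (x0 + B y)‖ :=
      mul_nonneg (norm_nonneg _) (norm_nonneg _)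
    rw [Real.norm_eq_abs, Real.norm_eq_abs, abs_norm, abs_of_nonneg h2]
    linarith [h1]

lemma h1SemiSq_comp_affine (x0 : Euc n) (B : Euc n ≃L[ℝ] Euc n) {Ohat : Set (Euc n)}
    (hO : IsOpen Ohat) {w : Euc n → ℝ} (hw : memH1 ((fun y => x0 + B y) '' Ohat) w) :
    absDet B * h1SemiSq Ohat (fun y => w (x0 + B y))
      ≤ opN B ^ 2 * h1SemiSq ((fun y => x0 + B y) '' Ohat) w := by
  have hOopen : IsOpen ((fun y => x0 + B y) '' Ohat) := isOpen_affine_image x0 B hO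
  have hint : Integrable (fun y => opN B ^ 2 * ‖fderiv ℝ w (x0 + B y)‖ ^ 2)
      (volume.restrict Ohat) :=
    ((memℒp_comp_affine x0 B hO.measurableSet hw.2.2).integrable_sq).const_mul _
  have key : h1SemiSq Ohat (fun y => w (x0 + B y))
      ≤ ∫ y in Ohat, opN B ^ 2 * ‖fderiv ℝ w (x0 + B y)‖ ^ 2 := by
    refine integral_mono_of_nonneg (Filter.Eventually.of_forall fun y => sq_nonneg _) hint ?_
    refine (ae_restrict_iff' hO.measurableSet).2 (Filter.Eventually.of_forall fun y hy => ?_)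
    dsimp only
    rw [fderiv_comp_affine x0 B hOopen hw.2.1 hy]
    have h1 : ‖(fderiv ℝ w (x0 + B y)).comp (B : Euc n →L[ℝ] Euc n)‖
        ≤ ‖fderiv ℝ w (x0 + B y)‖ * opN B := ContinuousLinearMap.opNorm_comp_le _ _
    have h2 : ‖(fderiv ℝ w (x0 + B y)).comp (B : Euc n →L[ℝ] Euc n)‖ ^ 2
        ≤ (‖fderiv ℝ w (x0 + B y)‖ * opN B) ^ 2 :=
      pow_le_pow_left₀ (norm_nonneg _) h1 2
    calc ‖(fderiv ℝ w (x0 + B y)).comp (B : Euc n →L[ℝ] Euc n)‖ ^ 2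
        ≤ (‖fderiv ℝ w (x0 + B y)‖ * opN B) ^ 2 := h2
      _ = opN B ^ 2 * ‖fderiv ℝ w (x0 + B y)‖ ^ 2 := by ring
  have hcv : ∫ x in (fun y => x0 + B y) '' Ohat, ‖fderiv ℝ w x‖ ^ 2
      = absDet B * ∫ y in Ohat, ‖fderiv ℝ w (x0 + B y)‖ ^ 2 :=
    setIntegral_affine x0 B hO.measurableSet (fun x => ‖fderiv ℝ w x‖ ^ 2)
  have hconst : ∫ y in Ohat, opN B ^ 2 * ‖fderiv ℝ w (x0 + B y)‖ ^ 2
      = opN B ^ 2 * ∫ y in Ohat, ‖fderiv ℝ w (x0 + B y)‖ ^ 2 := integral_const_mul _ _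
  have hd := absDet_pos B
  have hmul := mul_le_mul_of_nonneg_left key hd.le
  calc absDet B * h1SemiSq Ohat (fun y => w (x0 + B y))
      ≤ absDet B * ∫ y in Ohat, opN B ^ 2 * ‖fderiv ℝ w (x0 + B y)‖ ^ 2 := hmul
    _ = opN B ^ 2 * (absDet B * ∫ y in Ohat, ‖fderiv ℝ w (x0 + B y)‖ ^ 2) := by
        rw [hconst]; ring
    _ = opN B ^ 2 * h1SemiSq ((fun y => x0 + B y) '' Ohat) w := by
        rw [← hcv]; rfl

lemma l2Sq_affine (x0 : Euc n) (B : Euc n ≃L[ℝ] Euc n) {Ohat : Set (Euc n)}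
    (hO : MeasurableSet Ohat) (f : Euc n → ℝ) :
    l2Sq ((fun y => x0 + B y) '' Ohat) f = absDet B * l2Sq Ohat (fun y => f (x0 + B y)) :=
  setIntegral_affine x0 B hO (fun x => f x ^ 2)

lemma affine_inv_comp (x0 : Euc n) (B : Euc n ≃L[ℝ] Euc n) (y : Euc n) :
    -(B.symm x0) + B.symm (x0 + B y) = y := by
  simp

lemma affine_inv_image (x0 : Euc n) (B : Euc n ≃L[ℝ] Euc n) (Ohat : Set (Euc n)) :
    (fun x => -(B.symm x0) + B.symm x) '' ((fun y => x0 + B y) '' Ohat) = Ohat := by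
  rw [← Set.image_comp]
  have h : ((fun x => -(B.symm x0) + B.symm x) ∘ (fun y => x0 + B y)) = id :=
    funext fun y => affine_inv_comp x0 B y
  rw [h, Set.image_id]

lemma Kf_le_affine (x0 : Euc n) (B : Euc n ≃L[ℝ] Euc n) {Ohat : Set (Euc n)}
    (hO : IsOpen Ohat) (v : Euc n → ℝ) (t : ℝ) :
    Kf ((fun y => x0 + B y) '' Ohat) v t
      ≤ absDet B * Kf Ohat (fun y => v (x0 + B y)) (opN B.symm * t) := by
  have hOopen : IsOpen ((fun y => x0 + B y) '' Ohat) := isOpen_affine_image x0 B hO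
  have hd := absDet_pos B
  rw [mul_comm, ← div_le_iff₀ hd]
  refine le_ciInf fun wh => ?_
  rw [div_le_iff₀ hd]
  -- transported competitor
  set w : Euc n → ℝ := fun x => wh.1 (-(B.symm x0) + B.symm x) with hwdef
  have hwmem : memH1 ((fun y => x0 + B y) '' Ohat) w := by
    have h := memH1_comp_affine (-(B.symm x0)) B.symm hOopen
      (w := wh.1) (by rw [affine_inv_image x0 B Ohat]; exact wh.2)
    exact h
  have hKle : Kf ((fun y => x0 + B y) '' Ohat) v t
      ≤ l2Sq ((fun y => x0 + B y) '' Ohat) (fun x => v x - w x)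
        + t ^ 2 * h1SemiSq ((fun y => x0 + B y) '' Ohat) w :=
    ciInf_le (bddBelow_Kf _ v (sq_nonneg t)) ⟨w, hwmem⟩
  -- l2 term
  have hl2 : l2Sq ((fun y => x0 + B y) '' Ohat) (fun x => v x - w x)
      = absDet B * l2Sq Ohat (fun y => v (x0 + B y) - wh.1 y) := by
    rw [l2Sq_affine x0 B hO.measurableSet (fun x => v x - w x)]
    refine congrArg _ (congrArg _ (funext fun y => ?_))
    have hwy : w (x0 + B y) = wh.1 y := congrArg wh.1 (affine_inv_comp x0 B y)
    rw [hwy]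
  -- h1 term
  have hh1 : h1SemiSq ((fun y => x0 + B y) '' Ohat) w
      ≤ absDet B * (opN B.symm ^ 2 * h1SemiSq Ohat wh.1) := by
    have h := h1SemiSq_comp_affine (-(B.symm x0)) B.symm hOopen
      (w := wh.1) (by rw [affine_inv_image x0 B Ohat]; exact wh.2)
    rw [affine_inv_image x0 B Ohat, absDet_symm B] at h
    have h2 := mul_le_mul_of_nonneg_left h hd.le
    rw [← mul_assoc, mul_inv_cancel₀ hd.ne', one_mul] at h2
    exact h2
  calc Kf ((fun y => x0 + B y) '' Ohat) v t
      ≤ l2Sq ((fun y => x0 + B y) '' Ohat) (fun x => v x - w x)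
        + t ^ 2 * h1SemiSq ((fun y => x0 + B y) '' Ohat) w := hKle
    _ ≤ absDet B * l2Sq Ohat (fun y => v (x0 + B y) - wh.1 y)
        + t ^ 2 * (absDet B * (opN B.symm ^ 2 * h1SemiSq Ohat wh.1)) := by
        rw [hl2]
        exact add_le_add le_rfl (mul_le_mul_of_nonneg_left hh1 (sq_nonneg t))
    _ = (l2Sq Ohat (fun y => v (x0 + B y) - wh.1 y)
        + (opN B.symm * t) ^ 2 * h1SemiSq Ohat wh.1) * absDet B := by ring

lemma aemeasurable_rpow_Ioi (s : ℝ) :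
    AEMeasurable (fun r : ℝ => r ^ (-2 * s - 1)) (volume.restrict (Set.Ioi (0:ℝ))) :=
  ContinuousOn.aemeasurable
    (fun r hr => (Real.continuousAt_rpow_const r _ (Or.inl (ne_of_gt hr))).continuousWithinAt)
    measurableSet_Ioi

lemma lint_le_affine (x0 : Euc n) (B : Euc n ≃L[ℝ] Euc n) {Ohat : Set (Euc n)}
    (hO : IsOpen Ohat) (hc : 0 < opN B.symm) (s : ℝ) (v : Euc n → ℝ) :
    (∫⁻ t in Set.Ioi (0:ℝ),
        ENNReal.ofReal (t ^ (-2 * s - 1) * Kf ((fun y => x0 + B y) '' Ohat) v t))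
      ≤ ENNReal.ofReal (absDet B * opN B.symm ^ (2 * s)) *
        ∫⁻ t in Set.Ioi (0:ℝ),
          ENNReal.ofReal (t ^ (-2 * s - 1) * Kf Ohat (fun y => v (x0 + B y)) t) := by
  set c := opN B.symm with hcdef
  set d := absDet B with hddef
  set vh := fun y => v (x0 + B y) with hvhdef
  have hd := absDet_pos B
  set φ : ℝ → ℝ≥0∞ := fun r => ENNReal.ofReal (r ^ (-2 * s - 1) * Kf Ohat vh r) with hφdef
  have hφm : AEMeasurable φ (volume.restrict (Set.Ioi (0:ℝ))) :=
    ENNReal.measurable_ofReal.comp_aemeasurable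
      ((aemeasurable_rpow_Ioi s).mul (measurable_Kf Ohat vh).aemeasurable)
  have hk1 : (0:ℝ) ≤ d * c ^ (2 * s + 1) :=
    mul_nonneg hd.le (Real.rpow_nonneg hc.le _)
  -- pointwise bound
  have hpt : ∀ t ∈ Set.Ioi (0:ℝ),
      ENNReal.ofReal (t ^ (-2 * s - 1) * Kf ((fun y => x0 + B y) '' Ohat) v t)
        ≤ ENNReal.ofReal (d * c ^ (2 * s + 1)) * φ (c * t) := by
    intro t ht
    have htpos : (0:ℝ) < t := ht
    have hE : c ^ (2 * s + 1) * (c * t) ^ (-2 * s - 1) = t ^ (-2 * s - 1) := by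
      rw [Real.mul_rpow hc.le htpos.le, ← mul_assoc, ← Real.rpow_add hc]
      ring_nf
      rw [Real.rpow_zero, one_mul]
    have hreal : t ^ (-2 * s - 1) * Kf ((fun y => x0 + B y) '' Ohat) v t
        ≤ (d * c ^ (2 * s + 1)) * ((c * t) ^ (-2 * s - 1) * Kf Ohat vh (c * t)) := by
      have hkey := Kf_le_affine x0 B hO v t
      have h3 : (0:ℝ) ≤ t ^ (-2 * s - 1) := Real.rpow_nonneg htpos.le _
      calc t ^ (-2 * s - 1) * Kf ((fun y => x0 + B y) '' Ohat) v t
          ≤ t ^ (-2 * s - 1) * (d * Kf Ohat vh (c * t)) :=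
            mul_le_mul_of_nonneg_left hkey h3
        _ = (d * c ^ (2 * s + 1)) * ((c * t) ^ (-2 * s - 1) * Kf Ohat vh (c * t)) := by
            rw [← hE]; ring
    calc ENNReal.ofReal (t ^ (-2 * s - 1) * Kf ((fun y => x0 + B y) '' Ohat) v t)
        ≤ ENNReal.ofReal ((d * c ^ (2 * s + 1)) *
            ((c * t) ^ (-2 * s - 1) * Kf Ohat vh (c * t))) :=
          ENNReal.ofReal_le_ofReal hreal
      _ = ENNReal.ofReal (d * c ^ (2 * s + 1)) * φ (c * t) := ENNReal.ofReal_mul hk1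
  have step1 : (∫⁻ t in Set.Ioi (0:ℝ),
        ENNReal.ofReal (t ^ (-2 * s - 1) * Kf ((fun y => x0 + B y) '' Ohat) v t))
      ≤ ∫⁻ t in Set.Ioi (0:ℝ), ENNReal.ofReal (d * c ^ (2 * s + 1)) * φ (c * t) :=
    lintegral_mono_ae ((ae_restrict_iff' measurableSet_Ioi).2
      (Filter.Eventually.of_forall hpt))
  have step2 : (∫⁻ t in Set.Ioi (0:ℝ), ENNReal.ofReal (d * c ^ (2 * s + 1)) * φ (c * t))
      = ENNReal.ofReal (d * c ^ (2 * s + 1)) * ∫⁻ t in Set.Ioi (0:ℝ), φ (c * t) :=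
    lintegral_const_mul' _ _ ENNReal.ofReal_ne_top
  -- substitution
  have hpre : (fun t : ℝ => c * t) ⁻¹' (Set.Ioi 0) = Set.Ioi (0:ℝ) := by
    ext x
    simp only [Set.mem_preimage, Set.mem_Ioi]
    constructor
    · intro h
      by_contra hx
      push_neg at hx
      nlinarith
    · intro h
      positivity
  have hmapeq : Measure.map (fun t : ℝ => c * t) (volume.restrict (Set.Ioi (0:ℝ)))
      = ENNReal.ofReal c⁻¹ • volume.restrict (Set.Ioi (0:ℝ)) := by
    calc Measure.map (fun t : ℝ => c * t) (volume.restrict (Set.Ioi (0:ℝ)))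
        = Measure.map (fun t : ℝ => c * t)
            (volume.restrict ((fun t : ℝ => c * t) ⁻¹' (Set.Ioi 0))) := by rw [hpre]
      _ = (Measure.map (fun t : ℝ => c * t) volume).restrict (Set.Ioi 0) :=
          (Measure.restrict_map (measurable_const_mul c) measurableSet_Ioi).symm
      _ = (ENNReal.ofReal |c⁻¹| • volume).restrict (Set.Ioi 0) := by
          rw [Real.map_volume_mul_left hc.ne']
      _ = ENNReal.ofReal c⁻¹ • volume.restrict (Set.Ioi 0) := by
          rw [abs_of_pos (inv_pos.2 hc), Measure.restrict_smul]
  have hφm' : AEMeasurable φ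
      (Measure.map (fun t : ℝ => c * t) (volume.restrict (Set.Ioi (0:ℝ)))) := by
    rw [hmapeq]
    exact hφm.smul_measure _
  have step3 : (∫⁻ t in Set.Ioi (0:ℝ), φ (c * t))
      = ENNReal.ofReal c⁻¹ * ∫⁻ r in Set.Ioi (0:ℝ), φ r := by
    rw [← lintegral_map' hφm' (measurable_const_mul c).aemeasurable, hmapeq,
      lintegral_smul_measure, smul_eq_mul]
  -- combine constants
  have hconst : ENNReal.ofReal (d * c ^ (2 * s + 1)) * ENNReal.ofReal c⁻¹
      = ENNReal.ofReal (d * c ^ (2 * s)) := by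
    rw [← ENNReal.ofReal_mul hk1]
    congr 1
    rw [Real.rpow_add hc, Real.rpow_one]
    field_simp
  calc (∫⁻ t in Set.Ioi (0:ℝ),
        ENNReal.ofReal (t ^ (-2 * s - 1) * Kf ((fun y => x0 + B y) '' Ohat) v t))
      ≤ ENNReal.ofReal (d * c ^ (2 * s + 1)) * ∫⁻ t in Set.Ioi (0:ℝ), φ (c * t) := by
        rw [← step2]; exact step1
    _ = ENNReal.ofReal (d * c ^ (2 * s + 1)) *
        (ENNReal.ofReal c⁻¹ * ∫⁻ r in Set.Ioi (0:ℝ), φ r) := by rw [step3]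
    _ = ENNReal.ofReal (d * c ^ (2 * s)) * ∫⁻ r in Set.Ioi (0:ℝ), φ r := by
        rw [← mul_assoc, hconst]

lemma interp_eq_toReal (s : ℝ) (O : Set (Euc n)) (v : Euc n → ℝ) :
    interpSemiSq s O v
      = (∫⁻ t in Set.Ioi (0:ℝ), ENNReal.ofReal (t ^ (-2 * s - 1) * Kf O v t)).toReal := by
  rw [interpSemiSq_eq_Kf]
  refine integral_eq_lintegral_of_nonneg_ae ?_ ?_
  · refine (ae_restrict_iff' measurableSet_Ioi).2 (Filter.Eventually.of_forall fun t ht => ?_)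
    exact mul_nonneg (Real.rpow_nonneg (le_of_lt ht) _) (Kf_nonneg O v t)
  · exact ((aemeasurable_rpow_Ioi s).mul
      (measurable_Kf O v).aemeasurable).aestronglyMeasurable

instance : Subsingleton (Euc 0) := ⟨fun a b => by ext i; exact i.elim0⟩

lemma volume_univ_dim0 : (volume : Measure (Euc 0)) Set.univ = 1 := by
  have hmp := EuclideanSpace.volume_preserving_symm_measurableEquiv_toLp (ι := Fin 0)
  calc (volume : Measure (Euc 0)) Set.univ
      = volume ((MeasurableEquiv.toLp 2 (Fin 0 → ℝ)).symm ⁻¹' Set.univ) := by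
        rw [Set.preimage_univ]
    _ = volume (Set.univ : Set (Fin 0 → ℝ)) := hmp.measure_preimage
        MeasurableSet.univ.nullMeasurableSet
    _ = 1 := by
        rw [MeasureTheory.volume_pi, Measure.pi_univ]
        simp

lemma Kf_zero_dim0 (O : Set (Euc 0)) (v : Euc 0 → ℝ) (t : ℝ) : Kf O v t = 0 := by
  haveI : IsFiniteMeasure (volume.restrict O) := by
    constructor
    rw [Measure.restrict_apply_univ]
    exact lt_of_le_of_lt (measure_mono (Set.subset_univ O))
      (by rw [volume_univ_dim0]; exact ENNReal.one_lt_top)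
  have hveq : v = fun _ => v 0 := funext fun x => congrArg v (Subsingleton.elim x 0)
  have hv : memH1 O v := by
    refine ⟨?_, ?_, ?_⟩
    · rw [hveq]; exact memLp_const _
    · rw [hveq]; exact (differentiable_const _).differentiableOn
    · have hfd : (fun x : Euc 0 => ‖fderiv ℝ v x‖) = fun _ => (0:ℝ) := by
        funext x
        rw [hveq]
        simp
      rw [hfd]; exact MemLp.zero
  refine le_antisymm ?_ (Kf_nonneg O v t)
  have h := ciInf_le (bddBelow_Kf O v (sq_nonneg t)) ⟨v, hv⟩
  refine le_trans h ?_
  have h1 : l2Sq O (fun x => v x - v x) = 0 := by simp [l2Sq]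
  have h2 : h1SemiSq O v = 0 := by
    unfold h1SemiSq
    rw [hveq]
    simp
  rw [h1, h2, mul_zero, add_zero]

lemma interp_zero_dim0 (s : ℝ) (O : Set (Euc 0)) (v : Euc 0 → ℝ) :
    interpSemiSq s O v = 0 := by
  rw [interpSemiSq_eq_Kf]
  simp only [Kf_zero_dim0, mul_zero, integral_zero]

end InterpAux

/-- transformation of the interpolation seminorm under affine maps:
`|det B| ‖B‖^{-2s} |v̂|² ≤ |v|² ≤ |det B| ‖B⁻¹‖^{2s} |v̂|²`. -/
theorem interpSemi_affine_transform {n : ℕ} (Ohat : Set (Euc n)) (hOhat : IsLipschitzDomain Ohat)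
    (x0 : Euc n) (B : Euc n ≃L[ℝ] Euc n) (O : Set (Euc n))
    (hO : O = (fun y => x0 + B y) '' Ohat) (s : ℝ) (hs : s ∈ Set.Ioo (0 : ℝ) 1)
    (v : Euc n → ℝ) (hv : memHs s Ohat (fun y => v (x0 + B y))) :
    absDet B * opN B ^ (-(2 * s)) * interpSemiSq s Ohat (fun y => v (x0 + B y)) ≤
        interpSemiSq s O v ∧
      interpSemiSq s O v ≤
        absDet B * opN B.symm ^ (2 * s) * interpSemiSq s Ohat (fun y => v (x0 + B y)) := by
  have hOhopen : IsOpen Ohat := hOhat.1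
  subst hO
  rcases Nat.eq_zero_or_pos n with hn | hn
  · subst hn
    rw [interp_zero_dim0, interp_zero_dim0]
    constructor <;> simp
  · haveI : Nontrivial (Euc n) := by
      refine ⟨⟨EuclideanSpace.single ⟨0, hn⟩ (1:ℝ), 0, fun h => ?_⟩⟩
      have h2 := congrArg (fun f : Euc n => f ⟨0, hn⟩) h
      simp [EuclideanSpace.single_apply] at h2
    have hOopen : IsOpen ((fun y => x0 + B y) '' Ohat) := isOpen_affine_image x0 B hOhopen
    have hB : 0 < opN B := opN_pos B
    have hBs : 0 < opN B.symm := opN_pos B.symm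
    have key1 := lint_le_affine x0 B hOhopen hBs s v
    have key2 : (∫⁻ t in Set.Ioi (0:ℝ),
          ENNReal.ofReal (t ^ (-2 * s - 1) * Kf Ohat (fun y => v (x0 + B y)) t))
        ≤ ENNReal.ofReal ((absDet B)⁻¹ * opN B ^ (2 * s)) *
          ∫⁻ t in Set.Ioi (0:ℝ),
            ENNReal.ofReal (t ^ (-2 * s - 1) * Kf ((fun y => x0 + B y) '' Ohat) v t) := by
      have hBss : (0:ℝ) < opN B.symm.symm := by
        rw [ContinuousLinearEquiv.symm_symm]; exact hB
      have h := lint_le_affine (-(B.symm x0)) B.symm hOopen hBss s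
        (fun y => v (x0 + B y))
      rw [affine_inv_image x0 B Ohat] at h
      have hfun : (fun y => v (x0 + B (-(B.symm x0) + B.symm y))) = v := by
        funext y
        congr 1
        simp
      rw [hfun, absDet_symm B, ContinuousLinearEquiv.symm_symm] at h
      exact h
    rw [interp_eq_toReal s ((fun y => x0 + B y) '' Ohat) v,
      interp_eq_toReal s Ohat (fun y => v (x0 + B y))]
    by_cases hfin : (∫⁻ t in Set.Ioi (0:ℝ),
        ENNReal.ofReal (t ^ (-2 * s - 1) * Kf Ohat (fun y => v (x0 + B y)) t)) = ⊤
    · have hOtop : (∫⁻ t in Set.Ioi (0:ℝ),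
          ENNReal.ofReal (t ^ (-2 * s - 1) * Kf ((fun y => x0 + B y) '' Ohat) v t)) = ⊤ := by
        by_contra h
        rw [hfin] at key2
        exact (ENNReal.mul_ne_top ENNReal.ofReal_ne_top h) (top_le_iff.1 key2)
      rw [hfin, hOtop]
      simp
    · have hOfin : (∫⁻ t in Set.Ioi (0:ℝ),
          ENNReal.ofReal (t ^ (-2 * s - 1) * Kf ((fun y => x0 + B y) '' Ohat) v t)) ≠ ⊤ := by
        intro h
        rw [h] at key1
        exact (ENNReal.mul_ne_top ENNReal.ofReal_ne_top hfin) (top_le_iff.1 key1)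
      have r1 := ENNReal.toReal_mono (ENNReal.mul_ne_top ENNReal.ofReal_ne_top hfin) key1
      rw [ENNReal.toReal_mul, ENNReal.toReal_ofReal
        (mul_nonneg (absDet_pos B).le (Real.rpow_nonneg hBs.le _))] at r1
      have r2 := ENNReal.toReal_mono (ENNReal.mul_ne_top ENNReal.ofReal_ne_top hOfin) key2
      rw [ENNReal.toReal_mul, ENNReal.toReal_ofReal
        (mul_nonneg (inv_nonneg.2 (absDet_pos B).le) (Real.rpow_nonneg hB.le _))] at r2
      constructor
      · have hc2 : absDet B * opN B ^ (-(2 * s)) * ((absDet B)⁻¹ * opN B ^ (2 * s)) = 1 := by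
          have ha := (absDet_pos B).ne'
          have hb := (Real.rpow_pos_of_pos hB (2 * s)).ne'
          rw [Real.rpow_neg hB.le]
          field_simp
        have hnn : (0:ℝ) ≤ absDet B * opN B ^ (-(2 * s)) :=
          mul_nonneg (absDet_pos B).le (Real.rpow_nonneg hB.le _)
        calc absDet B * opN B ^ (-(2 * s)) *
              (∫⁻ t in Set.Ioi (0:ℝ),
                ENNReal.ofReal (t ^ (-2 * s - 1) * Kf Ohat (fun y => v (x0 + B y)) t)).toReal
            ≤ absDet B * opN B ^ (-(2 * s)) * (((absDet B)⁻¹ * opN B ^ (2 * s)) *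
              (∫⁻ t in Set.Ioi (0:ℝ),
                ENNReal.ofReal (t ^ (-2 * s - 1) *
                  Kf ((fun y => x0 + B y) '' Ohat) v t)).toReal) :=
              mul_le_mul_of_nonneg_left r2 hnn
          _ = (absDet B * opN B ^ (-(2 * s)) * ((absDet B)⁻¹ * opN B ^ (2 * s))) *
              (∫⁻ t in Set.Ioi (0:ℝ),
                ENNReal.ofReal (t ^ (-2 * s - 1) *
                  Kf ((fun y => x0 + B y) '' Ohat) v t)).toReal := by ring
          _ = (∫⁻ t in Set.Ioi (0:ℝ),
                ENNReal.ofReal (t ^ (-2 * s - 1) *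
                  Kf ((fun y => x0 + B y) '' Ohat) v t)).toReal := by rw [hc2, one_mul]
      · exact r1

end
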